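/- arXiv:2310.00290 — 2 statements merged into one kernel-verified Lean document; each statement's English description precedes it below -/
import Mathlib

section
/- Suppose z(t) = ∑_{j=1}^{d} a_j t^{k_j} μ_j^t (a_j ∈ ℂ, k_j ∈ ℤ_{≥0}, μ_j ∈ ℂ distinct pairs (μ_j, k_j), a_j ≠ 0) is bounded: |z(t)| ≤ 1 for all t ≥ 1. Then for every j, either |μ_j| < 1, or |μ_j| = 1 and k_j = 0. -/
/-!
The growth of a mode `t ^ k * μ ^ t` is measured by `(‖μ‖, k)` in the lexicographic order. If
some mode is not non-growing, the largest growth `(r, K)` beats `(1, 0)`, so `t ^ K * r ^ t → ∞`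
and `z t / (t ^ K * r ^ t) → 0`. All modes of smaller growth vanish after this division, leaving
`∑ a j * (μ j / r) ^ t → 0` over the dominant modes, whose frequencies `μ j / r` are distinct
and of modulus one. Taking Cesàro means after dividing by one of these frequencies isolates
its coefficient, which is therefore `0`.
-/
open Finset Filter Topology

lemma isBoundedUnder_norm_geom_sum {ω : ℂ} (hω : ‖ω‖ ≤ 1) (hω1 : ω ≠ 1) :
    IsBoundedUnder (· ≤ ·) atTop (norm ∘ fun N : ℕ => ∑ t ∈ range N, ω ^ t) := by
  refine isBoundedUnder_of ⟨2 / ‖ω - 1‖, fun N => ?_⟩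
  have hnum : ‖ω ^ N - 1‖ ≤ 2 := by
    calc ‖ω ^ N - 1‖ ≤ ‖ω‖ ^ N + ‖(1 : ℂ)‖ := by rw [← norm_pow]; exact norm_sub_le _ _
      _ ≤ 2 := by norm_num; linarith [pow_le_one₀ (n := N) (norm_nonneg ω) hω]
  simp only [Function.comp_apply, geom_sum_eq hω1, norm_div]
  gcongr

lemma tendsto_cesaro_pow {ω : ℂ} (hω : ‖ω‖ ≤ 1) :
    Tendsto (fun N : ℕ => (N⁻¹ : ℝ) • ∑ t ∈ range N, ω ^ t) atTop
      (𝓝 (if ω = 1 then 1 else 0)) := by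
  split_ifs with hω1
  · simpa [hω1] using (tendsto_const_nhds (x := (1 : ℂ))).cesaro_smul
  · exact tendsto_inv_atTop_zero.comp tendsto_natCast_atTop_atTop
      |>.zero_smul_isBoundedUnder_le (isBoundedUnder_norm_geom_sum hω hω1)

lemma Real.tendsto_pow_mul_pow_div_pow_mul_pow {s r : ℝ} {k K : ℕ} (hs : 0 ≤ s) (hr : 0 < r)
    (hlt : toLex (s, k) < toLex (r, K)) :
    Tendsto (fun t : ℕ => (t : ℝ) ^ k * s ^ t / ((t : ℝ) ^ K * r ^ t)) atTop (𝓝 0) := by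
  have heq : ∀ t : ℕ, (t : ℝ) ^ k * s ^ t / ((t : ℝ) ^ K * r ^ t)
      = (t : ℝ) ^ k * (s / r) ^ t / (t : ℝ) ^ K := by
    intro t; rw [div_pow]; field_simp
  simp only [heq]
  rcases Prod.Lex.toLex_lt_toLex.mp hlt with hsr | ⟨rfl, hkK⟩
  · refine squeeze_zero' (Eventually.of_forall fun t => by positivity) ?_
      (tendsto_pow_const_mul_const_pow_of_lt_one k (by positivity) ((div_lt_one hr).mpr hsr))
    filter_upwards [eventually_ge_atTop 1] with t ht
    exact div_le_self (by positivity) (one_le_pow₀ (by exact_mod_cast ht))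
  · simp only [div_self hr.ne', one_pow, mul_one]
    exact (tendsto_pow_div_pow_atTop_zero hkK).comp tendsto_natCast_atTop_atTop

lemma Complex.tendsto_pow_mul_pow_div_pow_mul_pow {m : ℂ} {r : ℝ} {k K : ℕ} (hr : 0 < r)
    (hlt : toLex (‖m‖, k) < toLex (r, K)) :
    Tendsto (fun t : ℕ => (t : ℂ) ^ k * m ^ t / ((t : ℂ) ^ K * (r : ℂ) ^ t)) atTop (𝓝 0) := by
  rw [tendsto_zero_iff_norm_tendsto_zero]
  simpa [Complex.norm_real, abs_of_pos hr] using
    Real.tendsto_pow_mul_pow_div_pow_mul_pow (norm_nonneg m) hr hlt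

lemma coeff_eq_zero_of_tendsto_sum_mul_pow {ι : Type*} {S : Finset ι} {c ω : ι → ℂ}
    (hω : ∀ j ∈ S, ‖ω j‖ = 1) (hinj : Set.InjOn ω S)
    (hlim : Tendsto (fun t : ℕ => ∑ j ∈ S, c j * ω j ^ t) atTop (𝓝 0)) {i : ι} (hi : i ∈ S) :
    c i = 0 := by
  have hωi : ω i ≠ 0 := norm_ne_zero_iff.mp (by rw [hω i hi]; exact one_ne_zero)
  set ν : ι → ℂ := fun j => ω j / ω i
  have hν : ∀ j ∈ S, ‖ν j‖ ≤ 1 := fun j hj => by simp [ν, hω j hj, hω i hi]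
  have hν1 : ∀ j ∈ S, ν j = 1 ↔ j = i := fun j hj => by
    rw [div_eq_one_iff_eq hωi]; exact hinj.eq_iff hj hi
  -- dividing by `ω i ^ t` keeps the norm and turns the `i`-th frequency into `1`
  have hrot : Tendsto (fun t : ℕ => ∑ j ∈ S, c j * ν j ^ t) atTop (𝓝 0) := by
    rw [tendsto_zero_iff_norm_tendsto_zero] at hlim ⊢
    refine hlim.congr fun t => ?_
    simp only [ν, div_pow, ← mul_div_assoc, ← Finset.sum_div, norm_div, norm_pow, hω i hi,
      one_pow, div_one]
  have hmean : Tendsto (fun N : ℕ => ∑ j ∈ S, c j * ((N⁻¹ : ℝ) • ∑ t ∈ range N, ν j ^ t))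
      atTop (𝓝 (∑ j ∈ S, c j * if ν j = 1 then 1 else 0)) :=
    tendsto_finsetSum S fun j hj => (tendsto_cesaro_pow (hν j hj)).const_mul (c j)
  have hsum : ∑ j ∈ S, c j * (if ν j = 1 then 1 else 0) = c i := by
    rw [Finset.sum_eq_single_of_mem i hi fun j hj hji => by simp [(hν1 j hj).not.mpr hji]]
    simp [(hν1 i hi).mpr rfl]
  refine hsum ▸ tendsto_nhds_unique (hmean.congr fun N => ?_) hrot.cesaro_smul
  simp only [Finset.mul_sum, Finset.smul_sum, mul_smul_comm]
  exact Finset.sum_comm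

lemma tendsto_sum_div_sub_sum_top {ι : Type*} (s : Finset ι) (a μ : ι → ℂ) (k : ι → ℕ)
    {r : ℝ} {K : ℕ} (hr : 0 < r) (hdom : ∀ j ∈ s, toLex (‖μ j‖, k j) ≤ toLex (r, K)) :
    Tendsto (fun t : ℕ => (∑ j ∈ s, a j * (t : ℂ) ^ k j * μ j ^ t) / ((t : ℂ) ^ K * (r : ℂ) ^ t)
      - ∑ j ∈ s with ‖μ j‖ = r ∧ k j = K, a j * (μ j / r) ^ t) atTop (𝓝 0) := by
  simp only [Finset.sum_filter, Finset.sum_div, ← Finset.sum_sub_distrib]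
  rw [← Finset.sum_const_zero (s := s)]
  refine tendsto_finsetSum s fun j hj => ?_
  by_cases htop : ‖μ j‖ = r ∧ k j = K
  · refine tendsto_const_nhds.congr' ?_
    filter_upwards [eventually_ne_atTop 0] with t ht
    have hr' : (r : ℂ) ≠ 0 := Complex.ofReal_ne_zero.mpr hr.ne'
    rw [if_pos htop, htop.2, div_pow]
    field_simp
    ring
  · have hlt : toLex (‖μ j‖, k j) < toLex (r, K) :=
      (hdom j hj).lt_of_ne fun h => htop (Prod.mk.inj (toLex_inj.mp h))
    simpa [if_neg htop, mul_assoc, mul_div_assoc] using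
      (Complex.tendsto_pow_mul_pow_div_pow_mul_pow hr hlt).const_mul (a j)

theorem bounded_modes_nongrowing_general (d : ℕ)
    (a : Fin d → ℂ) (k : Fin d → ℕ) (μ : Fin d → ℂ)
    (hdist : Function.Injective (fun j : Fin d => (μ j, k j)))
    (ha : ∀ j, a j ≠ 0)
    (z : ℕ → ℂ)
    (hz : ∀ t : ℕ, z t = ∑ j : Fin d, a j * (t : ℂ) ^ (k j) * μ j ^ t)
    (hbdd : ∀ t : ℕ, 1 ≤ t → ‖z t‖ ≤ 1) :
    ∀ j : Fin d, ‖μ j‖ < 1 ∨ (‖μ j‖ = 1 ∧ k j = 0) := by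
  intro j₀
  by_contra hbad
  have hgrow : toLex ((1 : ℝ), 0) < toLex (‖μ j₀‖, k j₀) := by
    rw [Prod.Lex.toLex_lt_toLex]
    push Not at hbad
    rcases hbad.1.lt_or_eq with h | h
    · exact Or.inl h
    · exact Or.inr ⟨h, Nat.pos_of_ne_zero (hbad.2 h.symm)⟩
  obtain ⟨i, -, hi⟩ := Finset.exists_max_image univ (fun j => toLex (‖μ j‖, k j)) ⟨j₀, mem_univ _⟩
  have hgrowi : toLex ((1 : ℝ), 0) < toLex (‖μ i‖, k i) := hgrow.trans_le (hi j₀ (mem_univ _))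
  have hr : 0 < ‖μ i‖ := by
    rcases Prod.Lex.toLex_lt_toLex.mp hgrowi with h | ⟨h, -⟩ <;> simp only at h <;> linarith
  have hzW : Tendsto (fun t : ℕ => z t / ((t : ℂ) ^ k i * (‖μ i‖ : ℂ) ^ t)) atTop (𝓝 0) := by
    have hinv := Complex.tendsto_pow_mul_pow_div_pow_mul_pow (m := 1) hr (by simpa using hgrowi)
    simp only [pow_zero, one_pow, one_div, one_mul] at hinv
    simpa [div_eq_inv_mul] using hinv.zero_mul_isBoundedUnder_le
      (isBoundedUnder_of_eventually_le (a := 1) ((eventually_ge_atTop 1).mono hbdd))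
  have htop := (hzW.sub (tendsto_sum_div_sub_sum_top univ a μ k hr fun j _ => hi j (mem_univ _)))
  simp only [hz, sub_sub_cancel, sub_zero] at htop
  refine ha i (coeff_eq_zero_of_tendsto_sum_mul_pow (fun j hj => ?_) (fun j hj j' hj' h => ?_)
    htop (by simp))
  · simp_all [Complex.norm_real]
  · simp only [Finset.coe_filter, Set.mem_ofPred_eq] at hj hj'
    have hr' : (‖μ i‖ : ℂ) ≠ 0 := Complex.ofReal_ne_zero.mpr hr.ne'
    exact hdist (Prod.ext ((div_left_inj' hr').mp h) (hj.2.2.trans hj'.2.2.symm))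

theorem bounded_modes_nongrowing (d : ℕ) (hd : 1 ≤ d)
    (a : Fin d → ℂ) (k : Fin d → ℕ) (μ : Fin d → ℂ)
    (hdist : Function.Injective (fun j : Fin d => (μ j, k j)))
    (ha : ∀ j, a j ≠ 0)
    (z : ℕ → ℂ)
    (hz : ∀ t : ℕ, z t = ∑ j : Fin d, a j * (t : ℂ) ^ (k j) * μ j ^ t)
    (hbdd : ∀ t : ℕ, 1 ≤ t → ‖z t‖ ≤ 1) :
    ∀ j : Fin d, ‖μ j‖ < 1 ∨ (‖μ j‖ = 1 ∧ k j = 0) :=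
  bounded_modes_nongrowing_general d a k μ hdist ha z hz hbdd
end

section
/- Let z : ℤ_{≥-d+1} → [-1,1] satisfy the autoregressive recurrence z(t) = ∑_{ℓ=1}^{d} p_ℓ z(t-ℓ) for all t ≥ 1, with real coefficients p_ℓ. Then there exists an almost periodic function ap : ℤ → ℂ (a finite sum ∑_k c_k e^{iλ_k t} with λ_k ∈ ℝ) such that z(t) - ap(t) → 0 as t → ∞. -/
/-!
The shift `S` is a linear operator on sequences and the recurrence says `q(S) z = 0` for the
characteristic polynomial `q = ∏ (X - μ)` (over `ℂ`). Call a sequence good if it is a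
trigonometric polynomial plus a geometrically decaying sequence; we peel off one root at a time,
showing that a bounded `w` with `(S - μ) w` good is good. A frequency `l ≠ μ` of the
trigonometric part is `(S - μ)` of a multiple of `l ^ n`, which leaves
`(S - μ) v = c μ ^ n + r` with `r` decaying. For `‖μ‖ < 1` everything decays. For `‖μ‖ ≥ 1`,
solving backwards from infinity gives `v n = (c / μ * n + K) * μ ^ n + τ n` with `τ` decaying;
boundedness kills the resonant term and leaves `K * μ ^ n`, trigonometric if `‖μ‖ = 1` and zero
if `‖μ‖ > 1`.
-/

open Finset Filter Polynomial Topology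

section Shift

variable {R : Type*} [CommRing R]

noncomputable def shiftSeq : Module.End R (ℕ → R) := LinearMap.funLeft R R (· + 1)

@[simp]
theorem shiftSeq_apply (w : ℕ → R) (n : ℕ) : shiftSeq w n = w (n + 1) := rfl

theorem shiftSeq_pow_apply (k : ℕ) (w : ℕ → R) (n : ℕ) : (shiftSeq ^ k) w n = w (n + k) := by
  induction k generalizing w with
  | zero => rfl
  | succ k ih => rw [pow_succ, Module.End.mul_apply, ih]; rfl

theorem aeval_shiftSeq_X_sub_C_apply (μ : R) (w : ℕ → R) (n : ℕ) :
    aeval shiftSeq (X - C μ) w n = w (n + 1) - μ * w n := by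
  simp

theorem aeval_shiftSeq_X_sub_C_geom (μ l : R) :
    aeval shiftSeq (X - C μ) (fun n => l ^ n) = (l - μ) • fun n => l ^ n := by
  ext n
  simp only [aeval_shiftSeq_X_sub_C_apply, Pi.smul_apply, smul_eq_mul]
  ring

theorem aeval_shiftSeq_X_sub_C_natCast_mul_geom (μ : R) :
    aeval shiftSeq (X - C μ) (fun n => n * μ ^ n) = μ • fun n => μ ^ n := by
  ext n
  simp only [aeval_shiftSeq_X_sub_C_apply, Pi.smul_apply, smul_eq_mul]
  push_cast
  ring

theorem eq_smul_geom_of_aeval_shiftSeq_X_sub_C_eq_zero {μ : R} {u : ℕ → R}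
    (h : aeval shiftSeq (X - C μ) u = 0) : u = u 0 • fun n => μ ^ n := by
  ext n
  induction n with
  | zero => simp
  | succ n ih =>
    have hn := congrFun h n
    rw [aeval_shiftSeq_X_sub_C_apply, Pi.zero_apply, sub_eq_zero] at hn
    simp only [Pi.smul_apply, smul_eq_mul] at ih ⊢
    rw [hn, ih]
    ring

theorem aeval_shiftSeq_eq_zero_of_recurrence {d : ℕ} {p : ℕ → R} {u : ℕ → R}
    (h : ∀ n, u (n + d) = ∑ ℓ ∈ Icc 1 d, p ℓ * u (n + (d - ℓ))) :
    aeval shiftSeq (X ^ d - ∑ ℓ ∈ Icc 1 d, C (p ℓ) * X ^ (d - ℓ)) u = 0 := by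
  ext n
  simp [map_sum, shiftSeq_pow_apply, h n, Module.algebraMap_end_apply]

theorem monic_X_pow_sub_sum_C_mul_X_pow [Nontrivial R] (d : ℕ) (p : ℕ → R) :
    (X ^ d - ∑ ℓ ∈ Icc 1 d, C (p ℓ) * X ^ (d - ℓ)).Monic := by
  refine monic_X_pow_sub ((degree_sum_le _ _).trans_lt ?_)
  refine (Finset.sup_lt_iff (WithBot.bot_lt_coe d)).2 fun ℓ hℓ => ?_
  rw [Finset.mem_Icc] at hℓ
  exact (degree_C_mul_X_pow_le _ _).trans_lt (WithBot.coe_lt_coe.2 (Nat.sub_lt_self hℓ.1 hℓ.2))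

end Shift

noncomputable def expDecaySeq : Submodule ℂ (ℕ → ℂ) where
  carrier := {r | ∃ M ρ : ℝ, 0 ≤ ρ ∧ ρ < 1 ∧ ∀ n, ‖r n‖ ≤ M * ρ ^ n}
  zero_mem' := ⟨0, 0, le_rfl, zero_lt_one, by simp⟩
  add_mem' := by
    rintro r s ⟨M, ρ, hρ0, hρ1, hr⟩ ⟨M', ρ', hρ0', hρ1', hs⟩
    have hM : 0 ≤ M := (norm_nonneg _).trans (by simpa using hr 0)
    have hM' : 0 ≤ M' := (norm_nonneg _).trans (by simpa using hs 0)
    refine ⟨M + M', max ρ ρ', hρ0.trans (le_max_left _ _), max_lt hρ1 hρ1', fun n => ?_⟩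
    calc ‖r n + s n‖ ≤ M * ρ ^ n + M' * ρ' ^ n :=
          (norm_add_le _ _).trans (add_le_add (hr n) (hs n))
      _ ≤ M * max ρ ρ' ^ n + M' * max ρ ρ' ^ n := by gcongr <;> simp
      _ = (M + M') * max ρ ρ' ^ n := by ring
  smul_mem' := by
    rintro c r ⟨M, ρ, hρ0, hρ1, hr⟩
    refine ⟨‖c‖ * M, ρ, hρ0, hρ1, fun n => ?_⟩
    rw [Pi.smul_apply, norm_smul, mul_assoc]
    exact mul_le_mul_of_nonneg_left (hr n) (norm_nonneg c)

theorem exists_bound_of_mem_expDecaySeq {r : ℕ → ℂ} (hr : r ∈ expDecaySeq) {ρ₀ : ℝ}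
    (hρ₀ : ρ₀ < 1) : ∃ M ρ : ℝ, 0 ≤ M ∧ ρ₀ ≤ ρ ∧ ρ < 1 ∧ ∀ n, ‖r n‖ ≤ M * ρ ^ n := by
  obtain ⟨M, ρ, hρ0, hρ1, hr⟩ := hr
  have hM : 0 ≤ M := (norm_nonneg _).trans (by simpa using hr 0)
  refine ⟨M, max ρ₀ ρ, hM, le_max_left _ _, max_lt hρ₀ hρ1, fun n => (hr n).trans ?_⟩
  gcongr
  exact le_max_right _ _

theorem geom_mem_expDecaySeq {μ : ℂ} (hμ : ‖μ‖ < 1) : (fun n => μ ^ n) ∈ expDecaySeq :=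
  ⟨1, ‖μ‖, norm_nonneg μ, hμ, fun n => by simp⟩

theorem memℓp_of_mem_expDecaySeq {r : ℕ → ℂ} (hr : r ∈ expDecaySeq) : Memℓp r ⊤ := by
  obtain ⟨M, ρ, hM, hρ0, hρ1, hr⟩ := exists_bound_of_mem_expDecaySeq hr zero_lt_one
  refine memℓp_infty ⟨M, ?_⟩
  rintro _ ⟨n, rfl⟩
  exact (hr n).trans (mul_le_of_le_one_right hM (pow_le_one₀ hρ0 hρ1.le))

theorem tendsto_zero_of_mem_expDecaySeq {r : ℕ → ℂ} (hr : r ∈ expDecaySeq) :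
    Tendsto r atTop (𝓝 0) := by
  obtain ⟨M, ρ, hρ0, hρ1, hr⟩ := hr
  rw [tendsto_zero_iff_norm_tendsto_zero]
  refine squeeze_zero (fun n => norm_nonneg _) hr ?_
  simpa using (tendsto_pow_atTop_nhds_zero_of_lt_one hρ0 hρ1).const_mul M

theorem mem_expDecaySeq_of_aeval_shiftSeq_X_sub_C_mem {μ : ℂ} (hμ : ‖μ‖ < 1) {u : ℕ → ℂ}
    (h : aeval shiftSeq (X - C μ) u ∈ expDecaySeq) : u ∈ expDecaySeq := by
  obtain ⟨M, ρ, -, hμρ, hρ1, hs⟩ := exists_bound_of_mem_expDecaySeq h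
    (ρ₀ := (‖μ‖ + 1) / 2) (by linarith)
  have hgap : 0 < ρ - ‖μ‖ := by linarith
  have hρ0 : 0 ≤ ρ := by linarith [norm_nonneg μ]
  set K := max ‖u 0‖ (M / (ρ - ‖μ‖))
  have hMK : M ≤ (ρ - ‖μ‖) * K := by
    rw [← div_le_iff₀' hgap]
    exact le_max_right _ _
  refine ⟨K, ρ, hρ0, hρ1, fun n => ?_⟩
  induction n with
  | zero => simp [K]
  | succ n ih =>
    have hu : u (n + 1) = μ * u n + aeval shiftSeq (X - C μ) u n := by
      rw [aeval_shiftSeq_X_sub_C_apply]; ring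
    calc ‖u (n + 1)‖ ≤ ‖μ‖ * ‖u n‖ + M * ρ ^ n := by
          rw [hu, ← norm_mul]; exact (norm_add_le _ _).trans (add_le_add le_rfl (hs n))
      _ ≤ ‖μ‖ * (K * ρ ^ n) + (ρ - ‖μ‖) * K * ρ ^ n := by gcongr
      _ = K * ρ ^ (n + 1) := by ring

theorem exists_mem_expDecaySeq_aeval_shiftSeq_X_sub_C_eq {μ : ℂ} (hμ : 1 ≤ ‖μ‖) {r : ℕ → ℂ}
    (hr : r ∈ expDecaySeq) : ∃ τ ∈ expDecaySeq, aeval shiftSeq (X - C μ) τ = r := by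
  obtain ⟨M, ρ, hM, hρ0, hρ1, hr⟩ := exists_bound_of_mem_expDecaySeq hr zero_lt_one
  have hμ0 : μ ≠ 0 := norm_pos_iff.1 (zero_lt_one.trans_le hμ)
  have hterm : ∀ n i, ‖μ⁻¹ ^ (i + 1) * r (n + i)‖ ≤ M * ρ ^ n * ρ ^ i := fun n i => by
    rw [norm_mul, norm_pow, norm_inv, mul_assoc, ← pow_add]
    exact mul_le_of_le_one_left (norm_nonneg _)
      (pow_le_one₀ (by positivity) (inv_le_one_of_one_le₀ hμ)) |>.trans (hr _)
  have hgeom : ∀ n, HasSum (fun i => M * ρ ^ n * ρ ^ i) (M * ρ ^ n * (1 - ρ)⁻¹) := fun n =>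
    (hasSum_geometric_of_lt_one hρ0 hρ1).mul_left _
  have hsum : ∀ n, Summable fun i => μ⁻¹ ^ (i + 1) * r (n + i) := fun n =>
    (hgeom n).summable.of_norm_bounded (hterm n)
  set σ : ℕ → ℂ := fun n => ∑' i, μ⁻¹ ^ (i + 1) * r (n + i)
  have hσ : ∀ n, μ * σ n = r n + σ (n + 1) := fun n => by
    simp only [σ]
    rw [(hsum n).tsum_eq_zero_add, mul_add, ← tsum_mul_left]
    congr 1
    · simp [hμ0]
    · refine tsum_congr fun i => ?_
      simp only [show n + (i + 1) = n + 1 + i by ring, pow_succ' μ⁻¹ (i + 1), ← mul_assoc,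
        mul_inv_cancel₀ hμ0, one_mul]
  refine ⟨-σ, ⟨M * (1 - ρ)⁻¹, ρ, hρ0, hρ1, fun n => ?_⟩, ?_⟩
  · rw [Pi.neg_apply, norm_neg, mul_right_comm]
    exact tsum_of_norm_bounded (hgeom n) (hterm n)
  · ext n
    rw [aeval_shiftSeq_X_sub_C_apply, Pi.neg_apply, Pi.neg_apply]
    linear_combination hσ n

noncomputable def trigPoly : Submodule ℂ (ℕ → ℂ) :=
  Submodule.span ℂ (Set.range fun θ : ℝ => fun n : ℕ => Complex.exp (θ * Complex.I) ^ n)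

theorem geom_mem_trigPoly {μ : ℂ} (hμ : ‖μ‖ = 1) : (fun n => μ ^ n) ∈ trigPoly := by
  refine Submodule.subset_span ⟨μ.arg, ?_⟩
  simpa [hμ] using congrArg (fun l : ℂ => fun n : ℕ => l ^ n) (Complex.norm_mul_exp_arg_mul_I μ)

theorem memℓp_of_mem_trigPoly {g : ℕ → ℂ} (hg : g ∈ trigPoly) : Memℓp g ⊤ := by
  induction hg using Submodule.span_induction with
  | mem _ h =>
    obtain ⟨θ, rfl⟩ := h
    exact memℓp_infty ⟨1, by rintro _ ⟨n, rfl⟩; simp [Complex.norm_exp_ofReal_mul_I]⟩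
  | zero => exact zero_memℓp
  | add _ _ _ _ hx hy => exact hx.add hy
  | smul c _ _ hx => exact hx.const_smul c

theorem exists_eq_sum_exp_of_mem_trigPoly {g : ℕ → ℂ} (hg : g ∈ trigPoly) :
    ∃ (n : ℕ) (c : Fin n → ℂ) (lam : Fin n → ℝ),
      ∀ t : ℕ, g t = ∑ i, c i * Complex.exp (Complex.I * lam i * t) := by
  obtain ⟨n, c, f, hf⟩ := Submodule.mem_span_set'.1 hg
  choose lam hlam using fun i => (f i).2
  refine ⟨n, c, lam, fun t => ?_⟩
  simp only [← hf, Finset.sum_apply, Pi.smul_apply, ← hlam, smul_eq_mul, ← Complex.exp_nat_mul]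
  congr! 3
  ring

theorem trigPoly_le_map_sup_span_geom (μ : ℂ) :
    trigPoly ≤ trigPoly.map (aeval shiftSeq (X - C μ)) ⊔ ℂ ∙ fun n => μ ^ n := by
  refine Submodule.span_le.2 ?_
  rintro _ ⟨θ, rfl⟩
  dsimp only
  set l := Complex.exp (θ * Complex.I)
  by_cases hl : l = μ
  · exact Submodule.mem_sup_right (by rw [hl]; exact Submodule.mem_span_singleton_self _)
  · refine Submodule.mem_sup_left ⟨(l - μ)⁻¹ • fun n => l ^ n,
      Submodule.smul_mem _ _ (Submodule.subset_span ⟨θ, rfl⟩), ?_⟩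
    rw [map_smul, aeval_shiftSeq_X_sub_C_geom, smul_smul, inv_mul_cancel₀ (sub_ne_zero.2 hl),
      one_smul]

theorem memℓp_aeval_shiftSeq_X_sub_C {w : ℕ → ℂ} (hw : Memℓp w ⊤) (μ : ℂ) :
    Memℓp (aeval shiftSeq (X - C μ) w) ⊤ := by
  have hshift : Memℓp (fun n => w (n + 1)) ⊤ := by
    obtain ⟨B, hB⟩ := memℓp_infty_iff.1 hw
    exact memℓp_infty ⟨B, by rintro _ ⟨n, rfl⟩; exact hB ⟨n + 1, rfl⟩⟩
  convert hshift.sub (hw.const_smul μ) using 1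
  ext n
  simp

theorem eq_zero_of_memℓp_mul_geom {μ K : ℂ} (hμ : 1 < ‖μ‖)
    (h : Memℓp (K • fun n => μ ^ n) ⊤) : K = 0 := by
  by_contra hK
  refine not_bddAbove_of_tendsto_atTop (l := atTop) ?_ (memℓp_infty_iff.1 h)
  simpa using (tendsto_pow_atTop_atTop_of_one_lt hμ).const_mul_atTop (norm_pos_iff.2 hK)

theorem eq_zero_of_memℓp_linear_mul_geom {μ a b : ℂ} (hμ : 1 ≤ ‖μ‖)
    (h : Memℓp (fun n : ℕ => (a * n + b) * μ ^ n) ⊤) : a = 0 := by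
  by_contra ha
  refine not_bddAbove_of_tendsto_atTop (tendsto_atTop_mono (fun n : ℕ => ?_)
    (tendsto_atTop_add_const_right _ (-‖b‖)
      (tendsto_natCast_atTop_atTop.const_mul_atTop (norm_pos_iff.2 ha))))
    (memℓp_infty_iff.1 h)
  calc ‖a‖ * n + -‖b‖ ≤ ‖a * n + b‖ := by
        have := norm_add_le (a * n + b) (-b)
        simp only [add_neg_cancel_right, norm_neg, norm_mul, Complex.norm_natCast] at this
        linarith
    _ ≤ ‖(a * n + b) * μ ^ n‖ := by
        rw [norm_mul, norm_pow]
        exact le_mul_of_one_le_right (norm_nonneg _) (one_le_pow₀ hμ)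

theorem smul_geom_mem_sup_of_memℓp {μ K : ℂ} (h : Memℓp (K • fun n => μ ^ n) ⊤) :
    (K • fun n => μ ^ n) ∈ trigPoly ⊔ expDecaySeq := by
  rcases lt_trichotomy ‖μ‖ 1 with hμ | hμ | hμ
  · exact Submodule.mem_sup_right (Submodule.smul_mem _ K (geom_mem_expDecaySeq hμ))
  · exact Submodule.mem_sup_left (Submodule.smul_mem _ K (geom_mem_trigPoly hμ))
  · rw [eq_zero_of_memℓp_mul_geom hμ h, zero_smul]
    exact zero_mem _

theorem mem_sup_of_aeval_shiftSeq_X_sub_C_eq {μ c : ℂ} {v r : ℕ → ℂ} (hv : Memℓp v ⊤)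
    (hr : r ∈ expDecaySeq) (h : aeval shiftSeq (X - C μ) v = c • (fun n => μ ^ n) + r) :
    v ∈ trigPoly ⊔ expDecaySeq := by
  by_cases hμ : ‖μ‖ < 1
  · refine Submodule.mem_sup_right (mem_expDecaySeq_of_aeval_shiftSeq_X_sub_C_mem hμ ?_)
    rw [h]
    exact add_mem (Submodule.smul_mem _ c (geom_mem_expDecaySeq hμ)) hr
  rw [not_lt] at hμ
  have hμ0 : μ ≠ 0 := norm_pos_iff.1 (zero_lt_one.trans_le hμ)
  obtain ⟨τ, hτ, hTτ⟩ := exists_mem_expDecaySeq_aeval_shiftSeq_X_sub_C_eq hμ hr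
  have hu : aeval shiftSeq (X - C μ) (v - τ - (c / μ) • fun n : ℕ => (n : ℂ) * μ ^ n) = 0 := by
    rw [map_sub, map_sub, map_smul, h, hTτ, aeval_shiftSeq_X_sub_C_natCast_mul_geom, smul_smul,
      div_mul_cancel₀ c hμ0]
    abel
  have hv_eq : ∀ n, v n = (c / μ * n + (v 0 - τ 0)) * μ ^ n + τ n := fun n => by
    have := congrFun (eq_smul_geom_of_aeval_shiftSeq_X_sub_C_eq_zero hu) n
    simp only [Pi.sub_apply, Pi.smul_apply, smul_eq_mul, Nat.cast_zero, zero_mul, mul_zero,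
      sub_zero] at this
    linear_combination this
  have hvτ : Memℓp (v - τ) ⊤ := hv.sub (memℓp_of_mem_expDecaySeq hτ)
  have hres : c / μ = 0 := by
    refine eq_zero_of_memℓp_linear_mul_geom hμ (b := v 0 - τ 0) ?_
    convert hvτ using 1
    ext n
    rw [Pi.sub_apply, hv_eq n]
    ring
  have hv' : v = (v 0 - τ 0) • (fun n => μ ^ n) + τ := by
    ext n
    rw [Pi.add_apply, Pi.smul_apply, smul_eq_mul, hv_eq n, hres]
    ring
  rw [hv'] at hvτ ⊢
  exact add_mem (smul_geom_mem_sup_of_memℓp (by simpa using hvτ)) (Submodule.mem_sup_right hτ)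

theorem mem_sup_of_aeval_shiftSeq_X_sub_C_mem_sup {μ : ℂ} {w : ℕ → ℂ} (hw : Memℓp w ⊤)
    (h : aeval shiftSeq (X - C μ) w ∈ trigPoly ⊔ expDecaySeq) : w ∈ trigPoly ⊔ expDecaySeq := by
  obtain ⟨g, hg, r, hr, hgr⟩ := Submodule.mem_sup.1 h
  obtain ⟨_, ⟨P, hP, rfl⟩, _, hs, hPs⟩ := Submodule.mem_sup.1 (trigPoly_le_map_sup_span_geom μ hg)
  obtain ⟨c, rfl⟩ := Submodule.mem_span_singleton.1 hs
  have hv : w - P ∈ trigPoly ⊔ expDecaySeq := by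
    refine mem_sup_of_aeval_shiftSeq_X_sub_C_eq (μ := μ) (c := c)
      (hw.sub (memℓp_of_mem_trigPoly hP)) hr ?_
    rw [map_sub, ← hgr, ← hPs]
    abel
  simpa using add_mem (Submodule.mem_sup_left hP) hv

theorem mem_sup_of_aeval_shiftSeq_prod_eq_zero (s : Multiset ℂ) {w : ℕ → ℂ} (hw : Memℓp w ⊤)
    (h : aeval shiftSeq (s.map fun μ => X - C μ).prod w = 0) : w ∈ trigPoly ⊔ expDecaySeq := by
  induction s using Multiset.induction_on generalizing w with
  | empty =>
    simp only [Multiset.map_zero, Multiset.prod_zero, map_one, Module.End.one_apply] at h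
    exact h ▸ zero_mem _
  | cons μ s ih =>
    rw [Multiset.map_cons, Multiset.prod_cons, mul_comm, map_mul, Module.End.mul_apply] at h
    exact mem_sup_of_aeval_shiftSeq_X_sub_C_mem_sup hw
      (ih (memℓp_aeval_shiftSeq_X_sub_C hw μ) h)

theorem mem_sup_of_aeval_shiftSeq_eq_zero {q : ℂ[X]} (hq : q.Monic) {w : ℕ → ℂ}
    (hw : Memℓp w ⊤) (h : aeval shiftSeq q w = 0) : w ∈ trigPoly ⊔ expDecaySeq := by
  rw [(IsAlgClosed.splits q).eq_prod_roots_of_monic hq] at h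
  exact mem_sup_of_aeval_shiftSeq_prod_eq_zero _ hw h

theorem exists_tendsto_sub_sum_exp_of_mem_sup {w : ℕ → ℂ} (hw : w ∈ trigPoly ⊔ expDecaySeq) :
    ∃ (n : ℕ) (c : Fin n → ℂ) (lam : Fin n → ℝ),
      Tendsto (fun t : ℕ => w t - ∑ i, c i * Complex.exp (Complex.I * lam i * t))
        atTop (𝓝 0) := by
  obtain ⟨g, hg, r, hr, rfl⟩ := Submodule.mem_sup.1 hw
  obtain ⟨n, c, lam, hglam⟩ := exists_eq_sum_exp_of_mem_trigPoly hg
  refine ⟨n, c, lam, (tendsto_zero_of_mem_expDecaySeq hr).congr fun t => ?_⟩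
  rw [Pi.add_apply, hglam]
  ring

theorem AR_model_almost_periodic (d : ℕ) (hd : 1 ≤ d) (p : ℕ → ℝ)
    (z : ℤ → ℝ)
    (hbdd : ∀ t : ℤ, -(d : ℤ) + 1 ≤ t → z t ∈ Set.Icc (-1 : ℝ) 1)
    (hrec : ∀ t : ℤ, 1 ≤ t → z t = ∑ ℓ ∈ Finset.Icc 1 d, p ℓ * z (t - ℓ)) :
    ∃ (n : ℕ) (c : Fin n → ℂ) (lam : Fin n → ℝ),
      Tendsto (fun t : ℕ =>
          (z t : ℂ) - ∑ i : Fin n, c i * Complex.exp (Complex.I * (lam i) * t))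
        atTop (nhds 0) := by
  set u : ℕ → ℂ := fun n => (z n : ℂ)
  have hu : Memℓp u ⊤ := memℓp_infty ⟨1, by
    rintro _ ⟨n, rfl⟩
    simpa [u, abs_le] using hbdd n (by omega)⟩
  have hrec' : ∀ n, u (n + d) = ∑ ℓ ∈ Icc 1 d, (p ℓ : ℂ) * u (n + (d - ℓ)) := fun n => by
    simp only [u]
    rw [hrec _ (by omega)]
    push_cast
    refine Finset.sum_congr rfl fun ℓ hℓ => ?_
    rw [Finset.mem_Icc] at hℓ
    congr 3
    omega
  exact exists_tendsto_sub_sum_exp_of_mem_sup (mem_sup_of_aeval_shiftSeq_eq_zero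
    (monic_X_pow_sub_sum_C_mul_X_pow d _) hu (aeval_shiftSeq_eq_zero_of_recurrence hrec'))
end
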